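/- Let G = (A, B, E) be a convex bipartite graph with orderings <_A and <_B, and let P = (a_1, ..., a_k), k ≥ 2, be an (A, b, b')-path in G² with a_1 <_A a_k. Then b <_B b', and a_1 is the <_A-minimum vertex of P. -/

import Mathlib

/-!
Convexity gives `b <_B b'`: otherwise the right endpoint of `a_k`, which lies right of `b`
since `a_1 ≤_A a_k`, puts `b` inside the neighborhood interval of `a_k`. Walking the path
backwards from `a_k` along common neighbours of consecutive vertices, convexity again shows
that every `G`-neighbour of `a_2, …, a_k` lies strictly right of `b`. Finally, if some `a_i`
(necessarily `1 < i < k`) were `<_A a_1`, a common neighbour `w` of `a_i, a_{i+1}` lies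
between `b` and the right endpoint of `a_1`, so `a_1 w` is an edge and `a_1 a_{i+1}` a chord
of `P` in `G²`.
-/

/-- The square of a simple graph: two distinct vertices are adjacent iff
their distance in `G` is at most `2`. -/
def SimpleGraph.square {V : Type*} (G : SimpleGraph V) : SimpleGraph V where
  Adj u v := u ≠ v ∧ (G.Adj u v ∨ ∃ w, G.Adj u w ∧ G.Adj w v)
  symm := ⟨fun u v => by
    rintro ⟨huv, h | ⟨w, h1, h2⟩⟩
    · exact ⟨huv.symm, Or.inl h.symm⟩
    · exact ⟨huv.symm, Or.inr ⟨w, h2.symm, h1.symm⟩⟩⟩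
  loopless := ⟨fun v => by simp⟩


/-- `A, B` form a bipartition of the graph `G`: they partition the vertex set and
every edge goes between `A` and `B`. -/
def SimpleGraph.IsBipartitionOf {V : Type*} (G : SimpleGraph V) (A B : Set V) : Prop :=
  (∀ v, v ∈ A ∨ v ∈ B) ∧ Disjoint A B ∧
    ∀ ⦃u v⦄, G.Adj u v → (u ∈ A ∧ v ∈ B) ∨ (u ∈ B ∧ v ∈ A)

/-- `ordB` is a convexity ordering of the part `B`: it is injective on `B` and for each
`a ∈ A` the neighborhood `N_G(a)` is a consecutive (convex) set with respect to it. -/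
def SimpleGraph.IsConvexityOrder {V : Type*} (G : SimpleGraph V) (A B : Set V)
    (ordB : V → ℕ) : Prop :=
  Set.InjOn ordB B ∧
    ∀ a ∈ A, ∀ b₁ ∈ B, ∀ b₂ ∈ B, ∀ b₃ ∈ B, G.Adj a b₁ → G.Adj a b₃ →
      ordB b₁ ≤ ordB b₂ → ordB b₂ ≤ ordB b₃ → G.Adj a b₂

/-- `ordA` orders `A` by the right endpoints of the neighborhood intervals in `B`:
it is injective on `A`, and whenever `ordA a ≤ ordA a'`, the right endpoint of the
interval of `a` is at most that of `a'` (i.e. every `G`-neighbor of `a` is `≤_B`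
some `G`-neighbor of `a'`). -/
def SimpleGraph.IsRightEndpointOrder {V : Type*} (G : SimpleGraph V) (A B : Set V)
    (ordA ordB : V → ℕ) : Prop :=
  Set.InjOn ordA A ∧
    ∀ a ∈ A, ∀ a' ∈ A, ordA a ≤ ordA a' → ∀ b ∈ B, G.Adj a b →
      ∃ b' ∈ B, G.Adj a' b' ∧ ordB b ≤ ordB b'

/-- `(p 0, …, p (k-1))` is an `(A, b, b')`-path in `G²`: an induced path in `G²`
with all vertices in `A`, where `b ∈ B` is a `G`-neighbor of exactly the first
vertex and `b' ∈ B` is a `G`-neighbor of exactly the last vertex, `b ≠ b'`. -/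
structure SimpleGraph.IsABPath {V : Type*} (G : SimpleGraph V) (A B : Set V)
    (k : ℕ) (p : Fin k → V) (b b' : V) : Prop where
  two_le : 2 ≤ k
  mem_A : ∀ i, p i ∈ A
  inj : Function.Injective p
  induced : ∀ i j : Fin k, (i : ℕ) < (j : ℕ) →
    (G.square.Adj (p i) (p j) ↔ (j : ℕ) = (i : ℕ) + 1)
  b_mem : b ∈ B
  b'_mem : b' ∈ B
  b_ne : b ≠ b'
  b_first : ∀ i : Fin k, G.Adj (p i) b ↔ (i : ℕ) = 0
  b'_last : ∀ i : Fin k, G.Adj (p i) b' ↔ (i : ℕ) = k - 1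

namespace SimpleGraph

variable {V : Type*} {G : SimpleGraph V} {A B : Set V} {ordA ordB : V → ℕ}

theorem square_adj_of_adj_of_adj {u v w : V} (huv : u ≠ v) (hu : G.Adj u w) (hv : G.Adj v w) :
    G.square.Adj u v :=
  ⟨huv, Or.inr ⟨w, hu, hv.symm⟩⟩

theorem IsBipartitionOf.mem_right_of_adj (hbip : G.IsBipartitionOf A B) {a w : V} (ha : a ∈ A)
    (haw : G.Adj a w) : w ∈ B := by
  rcases hbip.2.2 haw with ⟨-, hw⟩ | ⟨haB, -⟩
  · exact hw
  · exact absurd haB (Set.disjoint_left.mp hbip.2.1 ha)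

theorem IsBipartitionOf.exists_common_adj_of_square_adj (hbip : G.IsBipartitionOf A B)
    {a a' : V} (ha : a ∈ A) (ha' : a' ∈ A) (h : G.square.Adj a a') :
    ∃ w ∈ B, G.Adj a w ∧ G.Adj a' w := by
  obtain ⟨-, hdirect | ⟨w, haw, hwa'⟩⟩ := h
  · exact absurd (hbip.mem_right_of_adj ha hdirect) (Set.disjoint_left.mp hbip.2.1 ha')
  · exact ⟨w, hbip.mem_right_of_adj ha haw, haw, hwa'.symm⟩

theorem IsConvexityOrder.lt_of_adj_of_not_adj (hconv : G.IsConvexityOrder A B ordB)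
    {a b w w' : V} (ha : a ∈ A) (hb : b ∈ B) (hw : w ∈ B) (hw' : w' ∈ B)
    (haw : G.Adj a w) (haw' : G.Adj a w') (hbw' : ordB b ≤ ordB w') (hab : ¬G.Adj a b) :
    ordB b < ordB w := by
  by_contra! hwb
  exact hab (hconv.2 a ha w hw b hb w' hw' haw haw' hwb hbw')

theorem IsConvexityOrder.ordB_lt_of_adj_of_not_adj (hconv : G.IsConvexityOrder A B ordB)
    (hord : G.IsRightEndpointOrder A B ordA ordB) {a a' b b' : V} (ha : a ∈ A) (ha' : a' ∈ A)
    (hb : b ∈ B) (hb' : b' ∈ B) (haa' : ordA a ≤ ordA a') (hab : G.Adj a b)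
    (ha'b' : G.Adj a' b') (ha'b : ¬G.Adj a' b) : ordB b < ordB b' := by
  obtain ⟨c, hc, ha'c, hbc⟩ := hord.2 a ha a' ha' haa' b hb hab
  exact hconv.lt_of_adj_of_not_adj ha' hb hb' hc ha'b' ha'c hbc ha'b

theorem IsConvexityOrder.adj_of_ordA_le (hconv : G.IsConvexityOrder A B ordB)
    (hord : G.IsRightEndpointOrder A B ordA ordB) {a a' b w : V} (ha : a ∈ A) (ha' : a' ∈ A)
    (hb : b ∈ B) (hw : w ∈ B) (ha'a : ordA a' ≤ ordA a) (ha'w : G.Adj a' w) (hab : G.Adj a b)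
    (hbw : ordB b ≤ ordB w) : G.Adj a w := by
  obtain ⟨c, hc, hac, hwc⟩ := hord.2 a' ha' a ha ha'a w hw ha'w
  exact hconv.2 a ha b hb w hw c hc hab hac hbw hwc

namespace IsABPath

variable {k : ℕ} {p : Fin k → V} {b b' : V}

theorem exists_common_adj_succ (hP : G.IsABPath A B k p b b') (hbip : G.IsBipartitionOf A B)
    (i : ℕ) (hi : i + 1 < k) :
    ∃ w ∈ B, G.Adj (p ⟨i, by omega⟩) w ∧ G.Adj (p ⟨i + 1, hi⟩) w :=
  hbip.exists_common_adj_of_square_adj (hP.mem_A _) (hP.mem_A _)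
    ((hP.induced _ _ (by simp)).2 rfl)

theorem ordB_lt_of_adj (hP : G.IsABPath A B k p b b') (hbip : G.IsBipartitionOf A B)
    (hconv : G.IsConvexityOrder A B ordB) (hbb' : ordB b ≤ ordB b') (j : Fin k)
    (hj : (j : ℕ) ≠ 0) {w : V} (hw : G.Adj (p j) w) : ordB b < ordB w := by
  have step : ∀ j : Fin k, (j : ℕ) ≠ 0 → ∀ {w w' : V}, w' ∈ B → G.Adj (p j) w →
      G.Adj (p j) w' → ordB b ≤ ordB w' → ordB b < ordB w := fun j hj w w' hw' hw hjw' hbw' =>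
    hconv.lt_of_adj_of_not_adj (hP.mem_A j) hP.b_mem (hbip.mem_right_of_adj (hP.mem_A j) hw)
      hw' hw hjw' hbw' (mt (hP.b_first j).1 hj)
  induction h : k - 1 - (j : ℕ) generalizing j w with
  | zero => exact step j hj hP.b'_mem hw ((hP.b'_last j).2 (by omega)) hbb'
  | succ n ih =>
    obtain ⟨w', hw', hjw', hsw'⟩ := hP.exists_common_adj_succ hbip j (by omega)
    exact step j hj hw' hw hjw' (ih ⟨j + 1, _⟩ (by simp) hsw' (by dsimp only; omega)).le

end IsABPath

end SimpleGraph

/-- For an `(A, b, b')`-path `P = (a_1, …, a_k)` in the square of a convex bipartite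
graph with `a_1 <_A a_k`, we have `b <_B b'` and `a_1` is the `<_A`-minimum of `P`. -/
theorem abPath_order {V : Type*} (G : SimpleGraph V) (A B : Set V)
    (ordA ordB : V → ℕ) (hbip : G.IsBipartitionOf A B)
    (hconv : G.IsConvexityOrder A B ordB)
    (hord : G.IsRightEndpointOrder A B ordA ordB)
    (k : ℕ) (hk : 2 ≤ k) (p : Fin k → V) (b b' : V)
    (hP : G.IsABPath A B k p b b')
    (hfirstlast : ordA (p ⟨0, by omega⟩) < ordA (p ⟨k - 1, by omega⟩)) :
    ordB b < ordB b' ∧ ∀ i : Fin k, ordA (p ⟨0, by omega⟩) ≤ ordA (p i) := by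
  have hb_first : G.Adj (p ⟨0, by omega⟩) b := (hP.b_first _).2 rfl
  have hbb' : ordB b < ordB b' :=
    hconv.ordB_lt_of_adj_of_not_adj hord (hP.mem_A _) (hP.mem_A _) hP.b_mem hP.b'_mem
      hfirstlast.le hb_first ((hP.b'_last _).2 rfl)
      (mt (hP.b_first _).1 (by dsimp only; omega))
  refine ⟨hbb', fun ⟨i, hik⟩ => ?_⟩
  by_contra! hi
  rcases i with _ | i
  · exact lt_irrefl _ hi
  have hlt : i + 2 < k := by
    by_contra hlast
    have hi_last : (⟨i + 1, hik⟩ : Fin k) = ⟨k - 1, by omega⟩ :=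
      Fin.ext (by dsimp only; omega)
    exact lt_asymm hfirstlast (hi_last ▸ hi)
  obtain ⟨w, hw, hiw, hsw⟩ := hP.exists_common_adj_succ hbip (i + 1) hlt
  have hbw : ordB b < ordB w := hP.ordB_lt_of_adj hbip hconv hbb'.le _ (by simp) hiw
  have h0w : G.Adj (p ⟨0, by omega⟩) w :=
    hconv.adj_of_ordA_le hord (hP.mem_A _) (hP.mem_A _) hP.b_mem hw hi.le hiw hb_first hbw.le
  have hchord := SimpleGraph.square_adj_of_adj_of_adj (hP.inj.ne (by simp [Fin.ext_iff])) h0w hsw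
  exact absurd ((hP.induced _ _ (by simp)).1 hchord) (by simp)
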